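/- arXiv:cond-mat/0405662 — 2 statements merged into one kernel-verified Lean document; each statement's English description precedes it below -/
import Mathlib

section
/- For every natural number n ≥ 1, the following identity of natural numbers holds: n²·2^n + Σ_{i=1}^{n−1} i²·2^i·3^{n−1−i} = 10·3^n − (4n + 10)·2^n. (This is the second moment Σ_{k ∈ leaf} k²·P(k) = 2(5·3^n − (2n+5)·2^n) of the degree distribution over the rim vertices of the DSFN at generation n.) -/
lemma dsfn_aux (n : ℕ) (hn : 1 ≤ n) :
    n ^ 2 * 2 ^ n + (∑ i ∈ Finset.Icc 1 (n - 1), i ^ 2 * 2 ^ i * 3 ^ (n - 1 - i))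
      + (4 * n + 10) * 2 ^ n = 10 * 3 ^ n := by
  induction n, hn using Nat.le_induction with
  | base => simp
  | succ n hn ih =>
    have h1 : n + 1 - 1 = n := rfl
    rw [h1]
    have h2 : n - 1 + 1 = n := Nat.succ_pred_eq_of_pos hn
    have hsum : (∑ i ∈ Finset.Icc 1 n, i ^ 2 * 2 ^ i * 3 ^ (n - i))
        = 3 * (∑ i ∈ Finset.Icc 1 (n - 1), i ^ 2 * 2 ^ i * 3 ^ (n - 1 - i))
          + n ^ 2 * 2 ^ n := by
      rw [← h2, Finset.sum_Icc_succ_top (by omega : 1 ≤ n - 1 + 1)]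
      rw [h2, Nat.sub_self, pow_zero, mul_one, Finset.mul_sum]
      congr 1
      apply Finset.sum_congr rfl
      intro i hi
      simp only [Finset.mem_Icc] at hi
      have : n - i = (n - 1 - i) + 1 := by omega
      rw [this, pow_succ]
      ring
    rw [hsum]
    -- goal: (n+1)^2 * 2^(n+1) + (3*S + n^2*2^n) + (4*(n+1)+10)*2^(n+1) = 10*3^(n+1)
    have : 10 * 3 ^ (n + 1) = 3 * (10 * 3 ^ n) := by ring
    rw [this, ← ih]
    ring

/-- For every `n ≥ 1`, the identity of natural numbers
`n²·2^n + Σ_{i=1}^{n-1} i²·2^i·3^(n-1-i) = 10·3^n − (4n + 10)·2^n` holds: the second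
moment `Σ_{k ∈ leaf} k²·P(k) = 2(5·3^n − (2n+5)·2^n)` of the degree distribution over
the rim vertices of the DSFN at generation `n`. -/
theorem dsfn_rim_second_moment (n : ℕ) (hn : 1 ≤ n) :
    n ^ 2 * 2 ^ n + ∑ i ∈ Finset.Icc 1 (n - 1), i ^ 2 * 2 ^ i * 3 ^ (n - 1 - i)
      = 10 * 3 ^ n - (4 * n + 10) * 2 ^ n := by
  have := dsfn_aux n hn
  omega
end

section
/- For every natural number n ≥ 1, the adjacency matrix A_n of G_n, regarded as a linear map on the real vector space ℝ^{V(G_n)} ≅ ℝ^{3^n}, has kernel of dimension exactly 3^{n−1}; equivalently, 0 is an eigenvalue of A_n with multiplicity 3^{n−1}, and the index Ind(M_n) = dim ker M_n − dim ker M_nᵀ of the hub-to-rim block M_n of A_n equals 3^{n−1}. -/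
/-! Every edge of `G n` joins a hub (last coordinate `0`) to a rim vertex, so the adjacency
matrix is block antidiagonal and `ker A ≅ ker Mᵀ × ker M` for the hub-to-rim block `M`.
The block `Mᵀ` is injective, by induction on `n`: let `z` be a function on the hubs of `G (n + 1)`
whose sum over the hub neighbours of every rim vertex vanishes. The root edges of `G (n + 1)`
only reach copies `1` and `2`, so on copy `0` the induction hypothesis applies and `z` vanishes
there, in particular at the root; after that the root edges contribute nothing and copies `1`
and `2` follow in the same way. Hence `rank M = #hubs = 3 ^ (n - 1)`, and rank–nullity gives
`dim ker M = #rims - #hubs = 3 ^ (n - 1)`, which is also `dim ker A` and the index of `M`. -/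

namespace DSFN

/-- Vertex set of the `n`-th generation graph `G n` of the Barabási–Ravasz–Vicsek
deterministic scale-free network: `Fin n → Fin 3`, which is canonically
`{0,1,2} × V(G (n-1))` (first coordinate = which of the three copies). -/
abbrev Vert (n : ℕ) : Type := Fin n → Fin 3

/-- The root of `G n`: the all-zero vertex. -/
def root (n : ℕ) : Vert n := fun _ => 0

/-- The leaf set of `G n`: recursively, leaves of `G n` are the vertices `(t, ℓ)` with
`t ∈ {1,2}` and `ℓ` a leaf of `G (n-1)`; equivalently all coordinates are nonzero. -/
def IsLeaf {n : ℕ} (v : Vert n) : Prop := ∀ i, v i ≠ 0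

/-- The hub vertices of `G n`: the unique hub of `G 1` is the root `0`, and the hubs of
`G n` are the vertices `(t, h)` with `h` a hub of `G (n-1)`; equivalently the last
coordinate vanishes. All other vertices are rim vertices. -/
def IsHub {n : ℕ} (v : Vert n) : Prop := ∀ i : Fin n, (i : ℕ) + 1 = n → v i = 0

/-- Adjacency in `G n` : each of the three copies of `G (n-1)` is an induced subgraph,
and in addition the root is joined to every vertex `(t, ℓ)` with `t ∈ {1,2}` and
`ℓ` a leaf of `G (n-1)`. -/
def Adj : (n : ℕ) → Vert n → Vert n → Prop
  | 0 => fun _ _ => False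
  | n + 1 => fun u v =>
      (u 0 = v 0 ∧ Adj n (Fin.tail u) (Fin.tail v)) ∨
      (u = root (n + 1) ∧ (v 0 = 1 ∨ v 0 = 2) ∧ IsLeaf (Fin.tail v)) ∨
      (v = root (n + 1) ∧ (u 0 = 1 ∨ u 0 = 2) ∧ IsLeaf (Fin.tail u))

instance instDecIsLeaf {n : ℕ} : DecidablePred (IsLeaf (n := n)) := fun v =>
  inferInstanceAs (Decidable (∀ i, v i ≠ 0))

instance instDecIsHub {n : ℕ} : DecidablePred (IsHub (n := n)) := fun v =>
  inferInstanceAs (Decidable (∀ i : Fin n, (i : ℕ) + 1 = n → v i = 0))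

instance instDecAdj : (n : ℕ) → DecidableRel (Adj n)
  | 0 => fun _ _ => inferInstanceAs (Decidable False)
  | n + 1 => fun u v =>
      letI := instDecAdj n
      inferInstanceAs (Decidable
        ((u 0 = v 0 ∧ Adj n (Fin.tail u) (Fin.tail v)) ∨
        (u = root (n + 1) ∧ (v 0 = 1 ∨ v 0 = 2) ∧ IsLeaf (Fin.tail v)) ∨
        (v = root (n + 1) ∧ (u 0 = 1 ∨ u 0 = 2) ∧ IsLeaf (Fin.tail u))))

theorem adj_symm : ∀ (n : ℕ) (u v : Vert n), Adj n u v → Adj n v u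
  | 0, _, _, h => h.elim
  | n + 1, _, _, h =>
      h.elim (fun h1 => Or.inl ⟨h1.1.symm, adj_symm n _ _ h1.2⟩)
        (fun h2 => h2.elim (fun a => Or.inr (Or.inr a)) (fun a => Or.inr (Or.inl a)))

theorem adj_irrefl : (n : ℕ) → ∀ v : Vert n, ¬ Adj n v v
  | 0 => fun _ h => h
  | n + 1 => by
      intro v h
      rcases h with ⟨-, h2⟩ | ⟨h1, h2, -⟩ | ⟨h1, h2, -⟩
      · exact adj_irrefl n (Fin.tail v) h2
      · rw [h1] at h2
        exact h2.elim (fun c => absurd c (by simp [root])) (fun c => absurd c (by simp [root]))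
      · rw [h1] at h2
        exact h2.elim (fun c => absurd c (by simp [root])) (fun c => absurd c (by simp [root]))

/-- The `n`-th generation of the Barabási–Ravasz–Vicsek deterministic scale-free
network, as a simple graph (for `n ≥ 1`; `G 0` is the trivial one-vertex graph). -/
def G (n : ℕ) : SimpleGraph (Vert n) where
  Adj := Adj n
  symm := ⟨fun u v h => adj_symm n u v h⟩
  loopless := ⟨fun v h => adj_irrefl n v h⟩

instance (n : ℕ) : DecidableRel (G n).Adj := instDecAdj n

end DSFN

namespace DSFN

/-- The hub-to-rim block of the adjacency matrix of `G n`: its rows are indexed by the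
hub vertices, its columns by the rim vertices, and its `(h, r)` entry is `1` iff `h`
and `r` are adjacent in `G n`.  After reordering the vertices by the hub/rim
bipartition, the adjacency matrix of `G n` has the block form
`[[0, Mblock n], [(Mblock n)ᵀ, 0]]`. -/
def Mblock (n : ℕ) :
    Matrix {v : Vert n // IsHub v} {v : Vert n // ¬ IsHub v} ℝ :=
  fun h r => if (G n).Adj h.1 r.1 then 1 else 0

end DSFN

open Module LinearMap Matrix

namespace Matrix

section BlockAntidiagonal

variable {R : Type*} [CommRing R] {V : Type*} [Fintype V] (A : Matrix V V R) (p : V → Prop)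
  [DecidablePred p]

theorem mulVec_apply_of_pos (hA : ∀ u v, (p u ↔ p v) → A u v = 0) (x : V → R) {v : V}
    (hv : p v) : (A *ᵥ x) v = (A.toBlock p (¬p ·) *ᵥ fun u => x u) ⟨v, hv⟩ := by
  simp only [mulVec, dotProduct, toBlock_apply]
  rw [← Fintype.sum_subtype_add_sum_subtype p, Finset.sum_eq_zero, zero_add]
  exact fun u _ => by rw [hA _ _ (iff_of_true hv u.2), zero_mul]

theorem mulVec_apply_of_neg (hA : ∀ u v, (p u ↔ p v) → A u v = 0) (x : V → R) {v : V}
    (hv : ¬p v) : (A *ᵥ x) v = (A.toBlock (¬p ·) p *ᵥ fun u => x u) ⟨v, hv⟩ := by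
  simp only [mulVec, dotProduct, toBlock_apply]
  rw [← Fintype.sum_subtype_add_sum_subtype p, Finset.sum_eq_zero (s := Finset.univ)
    (f := fun u : {u // ¬p u} => A v u * x u), add_zero]
  exact fun u _ => by rw [hA _ _ (iff_of_false hv u.2), zero_mul]

theorem mulVec_eq_zero_iff_of_blockAntidiagonal (hA : ∀ u v, (p u ↔ p v) → A u v = 0)
    (x : V → R) :
    A *ᵥ x = 0 ↔ (A.toBlock (¬p ·) p *ᵥ fun u => x u) = 0 ∧
      (A.toBlock p (¬p ·) *ᵥ fun u => x u) = 0 := by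
  refine ⟨fun h => ⟨funext fun v => ?_, funext fun v => ?_⟩, fun ⟨h₁, h₂⟩ => funext fun v => ?_⟩
  · rw [← mulVec_apply_of_neg A p hA x v.2, h, Pi.zero_apply, Pi.zero_apply]
  · rw [← mulVec_apply_of_pos A p hA x v.2, h, Pi.zero_apply, Pi.zero_apply]
  · by_cases hv : p v
    · rw [mulVec_apply_of_pos A p hA x hv, h₂, Pi.zero_apply, Pi.zero_apply]
    · rw [mulVec_apply_of_neg A p hA x hv, h₁, Pi.zero_apply, Pi.zero_apply]

def kerEquivOfBlockAntidiagonal [DecidableEq V] (hA : ∀ u v, (p u ↔ p v) → A u v = 0) :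
    ker (toLin' A) ≃ₗ[R]
      ker (toLin' (A.toBlock (¬p ·) p)) × ker (toLin' (A.toBlock p (¬p ·))) where
  toFun x :=
    have hx := (mulVec_eq_zero_iff_of_blockAntidiagonal A p hA x).1 <| by
      simpa only [mem_ker, toLin'_apply] using x.2
    (⟨fun u => x.1 u, by simpa only [mem_ker, toLin'_apply] using hx.1⟩,
      ⟨fun u => x.1 u, by simpa only [mem_ker, toLin'_apply] using hx.2⟩)
  invFun y := ⟨fun v => if h : p v then y.1.1 ⟨v, h⟩ else y.2.1 ⟨v, h⟩, by
    have e₁ : (fun u : {v // p v} => if h : p u then y.1.1 ⟨u, h⟩ else y.2.1 ⟨u, h⟩) = y.1.1 :=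
      funext fun u => dif_pos u.2
    have e₂ : (fun u : {v // ¬p v} => if h : p u then y.1.1 ⟨u, h⟩ else y.2.1 ⟨u, h⟩) = y.2.1 :=
      funext fun u => dif_neg u.2
    rw [mem_ker, toLin'_apply, mulVec_eq_zero_iff_of_blockAntidiagonal A p hA, e₁, e₂]
    simpa only [mem_ker, toLin'_apply] using And.intro y.1.2 y.2.2⟩
  map_add' _ _ := rfl
  map_smul' _ _ := rfl
  left_inv x := by ext v; by_cases hv : p v <;> simp [hv]
  right_inv y := by ext u <;> simp [u.2]

end BlockAntidiagonal

variable {K : Type*} [Field K]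

theorem finrank_ker_toLin'_of_blockAntidiagonal {V : Type*} [Fintype V] [DecidableEq V]
    (A : Matrix V V K) (p : V → Prop) [DecidablePred p] (hA : ∀ u v, (p u ↔ p v) → A u v = 0) :
    finrank K (ker (toLin' A)) = finrank K (ker (toLin' (A.toBlock p (¬p ·)))) +
      finrank K (ker (toLin' (A.toBlock (¬p ·) p))) := by
  rw [(kerEquivOfBlockAntidiagonal A p hA).finrank_eq, finrank_prod, add_comm]

variable {m n : Type*} [Fintype n] [DecidableEq n]

theorem finrank_ker_toLin'_add_rank (M : Matrix m n K) :
    finrank K (ker (toLin' M)) + M.rank = Fintype.card n := by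
  rw [add_comm, ← finrank_fintype_fun_eq_card K]
  exact finrank_range_add_finrank_ker (toLin' M)

theorem finrank_ker_toLin'_sub_finrank_ker_toLin'_transpose [Fintype m] [DecidableEq m]
    (M : Matrix m n K) :
    finrank K (ker (toLin' M)) - finrank K (ker (toLin' Mᵀ)) =
      Fintype.card n - Fintype.card m := by
  have h₁ := finrank_ker_toLin'_add_rank M
  have h₂ := finrank_ker_toLin'_add_rank Mᵀ
  have h₃ := M.rank_le_card_height
  rw [rank_transpose] at h₂
  omega

end Matrix

namespace DSFN

theorem isHub_iff {n : ℕ} {v : Vert (n + 1)} : IsHub v ↔ v (Fin.last n) = 0 :=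
  ⟨fun h => h _ rfl, fun h i hi => by rwa [(Fin.ext (Nat.succ_injective hi) : i = Fin.last n)]⟩

theorem isHub_cons {n : ℕ} (t : Fin 3) (w : Vert (n + 1)) :
    IsHub (Fin.cons t w : Vert (n + 2)) ↔ IsHub w := by
  rw [isHub_iff, isHub_iff, ← Fin.succ_last, Fin.cons_succ]

theorem isHub_root (n : ℕ) : IsHub (root n) := fun _ _ => rfl

theorem ne_root_of_not_isHub {n : ℕ} {v : Vert n} (hv : ¬IsHub v) : v ≠ root n :=
  fun h => hv (h ▸ isHub_root n)

theorem root_succ (n : ℕ) : root (n + 1) = Fin.cons 0 (root n) := by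
  ext i; cases i using Fin.cases <;> rfl

theorem isLeaf_succ_iff {n : ℕ} {v : Vert (n + 1)} :
    IsLeaf v ↔ (v 0 = 1 ∨ v 0 = 2) ∧ IsLeaf (Fin.tail v) := by
  have h : ∀ t : Fin 3, t ≠ 0 ↔ t = 1 ∨ t = 2 := by decide
  simp only [IsLeaf, Fin.forall_fin_succ, Fin.tail, h]

theorem not_isHub_of_isLeaf {n : ℕ} {v : Vert (n + 1)} (hv : IsLeaf v) : ¬IsHub v :=
  fun h => hv _ (isHub_iff.1 h)

theorem adj_succ_iff {n : ℕ} {u v : Vert (n + 1)} :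
    Adj (n + 1) u v ↔ (u 0 = v 0 ∧ Adj n (Fin.tail u) (Fin.tail v)) ∨
      (u = root (n + 1) ∧ IsLeaf v) ∨ (v = root (n + 1) ∧ IsLeaf u) := by
  simp only [Adj, isLeaf_succ_iff]

theorem isHub_iff_not_isHub_of_adj : ∀ {n : ℕ} {u v : Vert n}, Adj n u v → (IsHub u ↔ ¬IsHub v)
  | n + 1, u, v, h => by
    rcases adj_succ_iff.1 h with ⟨-, h⟩ | ⟨rfl, hv⟩ | ⟨rfl, hu⟩
    · cases n with
      | zero => exact h.elim
      | succ n =>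
        rw [← Fin.cons_self_tail u, ← Fin.cons_self_tail v, isHub_cons, isHub_cons]
        exact isHub_iff_not_isHub_of_adj h
    · simp [isHub_root, not_isHub_of_isLeaf hv]
    · simp [isHub_root, not_isHub_of_isLeaf hu]

theorem adjMatrix_eq_zero_of_isHub_iff (n : ℕ) (u v : Vert n) (h : IsHub u ↔ IsHub v) :
    (G n).adjMatrix ℝ u v = 0 := by
  rw [SimpleGraph.adjMatrix_apply, if_neg]
  intro hadj
  have := isHub_iff_not_isHub_of_adj (n := n) hadj
  tauto

theorem Mblock_eq_toBlock (n : ℕ) : Mblock n = ((G n).adjMatrix ℝ).toBlock IsHub (¬IsHub ·) := rfl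

theorem Mblock_transpose_eq_toBlock (n : ℕ) :
    (Mblock n)ᵀ = ((G n).adjMatrix ℝ).toBlock (¬IsHub ·) IsHub := by
  ext h r
  simp only [transpose_apply, Mblock, toBlock_apply, SimpleGraph.adjMatrix_apply, (G n).adj_comm]

theorem sum_vert_succ {M : Type*} [AddCommMonoid M] {n : ℕ} (f : Vert (n + 1) → M) :
    ∑ v, f v = ∑ t, ∑ w, f (Fin.cons t w) := by
  rw [← (Fin.consEquiv fun _ => Fin 3).sum_comp, Fintype.sum_prod_type]
  rfl

theorem adjMatrix_mulVec_apply_eq_sum {n : ℕ} (y : Vert n → ℝ) (x : Vert n) :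
    ((G n).adjMatrix ℝ *ᵥ y) x = ∑ v, if Adj n x v then y v else 0 := by
  simp only [mulVec, dotProduct, SimpleGraph.adjMatrix_apply, ite_mul, one_mul, zero_mul]
  rfl

theorem adj_cons_iff {n : ℕ} {t : Fin 3} {w : Vert n}
    (hw : (Fin.cons t w : Vert (n + 1)) ≠ root (n + 1)) (v : Vert (n + 1)) :
    Adj (n + 1) (Fin.cons t w) v ↔ (v 0 = t ∧ Adj n w (Fin.tail v)) ∨
      (v = root (n + 1) ∧ IsLeaf (Fin.cons t w : Vert (n + 1))) := by
  simp only [adj_succ_iff, Fin.cons_zero, Fin.tail_cons, hw, false_and, false_or, eq_comm]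

theorem adjMatrix_mulVec_cons {n : ℕ} (y : Vert (n + 1) → ℝ) {t : Fin 3} {w : Vert n}
    (hw : (Fin.cons t w : Vert (n + 1)) ≠ root (n + 1)) :
    ((G (n + 1)).adjMatrix ℝ *ᵥ y) (Fin.cons t w) =
      ((G n).adjMatrix ℝ *ᵥ fun u => y (Fin.cons t u)) w +
        if IsLeaf (Fin.cons t w : Vert (n + 1)) then y (root (n + 1)) else 0 := by
  have hsplit : ∀ v, (if Adj (n + 1) (Fin.cons t w) v then y v else 0) =
      (if v 0 = t ∧ Adj n w (Fin.tail v) then y v else 0) +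
        if v = root (n + 1) ∧ IsLeaf (Fin.cons t w : Vert (n + 1)) then y v else 0 := by
    intro v
    simp only [adj_cons_iff hw]
    by_cases h₁ : v 0 = t ∧ Adj n w (Fin.tail v)
    · have h₂ : ¬(v = root (n + 1) ∧ IsLeaf (Fin.cons t w : Vert (n + 1))) := by
        rintro ⟨rfl, hleaf⟩
        exact hleaf 0 (by simpa [root] using h₁.1.symm)
      simp [h₁, h₂]
    · simp [h₁]
  rw [adjMatrix_mulVec_apply_eq_sum, adjMatrix_mulVec_apply_eq_sum,
    Finset.sum_congr rfl fun v _ => hsplit v, Finset.sum_add_distrib,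
    sum_vert_succ (fun v => if v 0 = t ∧ _ then y v else 0)]
  simp [ite_and, Finset.sum_ite_eq', Fin.tail_cons]

theorem adjMatrix_G_zero : (G 0).adjMatrix ℝ = 0 := by
  ext u v
  rw [SimpleGraph.adjMatrix_apply, Matrix.zero_apply]
  exact if_neg fun h => h

theorem eq_zero_of_adjMatrix_mulVec_eq_zero_on_rim :
    ∀ (n : ℕ) (y : Vert (n + 1) → ℝ), (∀ v, ¬IsHub v → y v = 0) →
      (∀ r, ¬IsHub r → ((G (n + 1)).adjMatrix ℝ *ᵥ y) r = 0) → y = 0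
  | 0, y, hsupp, hrim => by
    have hroot : y (root 1) = 0 := by
      have h := hrim (Fin.cons 1 (root 0)) (by decide)
      rwa [adjMatrix_mulVec_cons y (by decide), adjMatrix_G_zero, zero_mulVec, Pi.zero_apply,
        zero_add, if_pos (by decide)] at h
    funext v
    by_cases hv : IsHub v
    · have : v = root 1 := funext fun i => by rw [Fin.fin_one_eq_zero i]; exact isHub_iff.1 hv
      rw [this, hroot, Pi.zero_apply]
    · exact hsupp v hv
  | n + 1, y, hsupp, hrim => by
    have hcopy : ∀ t, (t = 0 ∨ y (root (n + 2)) = 0) → (fun w => y (Fin.cons t w)) = 0 :=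
      fun t ht => eq_zero_of_adjMatrix_mulVec_eq_zero_on_rim n _
        (fun w hw => hsupp _ ((isHub_cons t w).not.2 hw)) fun w hw => by
          have h := hrim _ ((isHub_cons t w).not.2 hw)
          rw [adjMatrix_mulVec_cons y (ne_root_of_not_isHub ((isHub_cons t w).not.2 hw))] at h
          rcases ht with rfl | hroot
          · rwa [if_neg (fun hleaf => hleaf 0 rfl), add_zero] at h
          · rwa [hroot, ite_self, add_zero] at h
    have hroot : y (root (n + 2)) = 0 := by
      rw [root_succ]
      exact congrFun (hcopy 0 (Or.inl rfl)) (root (n + 1))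
    funext v
    rw [← Fin.cons_self_tail v]
    exact congrFun (hcopy (v 0) (Or.inr hroot)) _

theorem ker_toLin'_Mblock_transpose (n : ℕ) : ker (toLin' (Mblock (n + 1))ᵀ) = ⊥ := by
  rw [ker_eq_bot']
  intro z hz
  set y : Vert (n + 1) → ℝ := fun v => if h : IsHub v then z ⟨v, h⟩ else 0
  have hyz : (fun u : {v // IsHub v} => y u) = z := funext fun u => dif_pos u.2
  have hy : y = 0 := eq_zero_of_adjMatrix_mulVec_eq_zero_on_rim n y (fun v hv => dif_neg hv)
    fun r hr => by
      rw [mulVec_apply_of_neg _ IsHub (adjMatrix_eq_zero_of_isHub_iff _) y hr,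
        ← Mblock_transpose_eq_toBlock, hyz, ← toLin'_apply, hz, Pi.zero_apply]
  rw [← hyz, hy]
  rfl

def hubEquiv (n : ℕ) : {v : Vert (n + 1) // IsHub v} ≃ Vert n where
  toFun v := Fin.init v.1
  invFun w := ⟨Fin.snoc w 0, isHub_iff.2 (Fin.snoc_last _ _)⟩
  left_inv v := Subtype.ext <| by
    conv_rhs => rw [← Fin.snoc_init_self v.1, isHub_iff.1 v.2]
  right_inv w := Fin.init_snoc _ _

theorem card_hub (n : ℕ) : Fintype.card {v : Vert (n + 1) // IsHub v} = 3 ^ n := by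
  simp [Fintype.card_congr (hubEquiv n)]

theorem card_rim (n : ℕ) : Fintype.card {v : Vert (n + 1) // ¬IsHub v} = 2 * 3 ^ n := by
  rw [Fintype.card_subtype_compl, card_hub]
  simp [pow_succ]
  omega

/-- For every `n ≥ 1`, the adjacency matrix `A n` of `G n`, regarded
as a linear map on `ℝ^{V (G n)} ≅ ℝ^{3 ^ n}`, has kernel of dimension exactly
`3 ^ (n-1)`; equivalently, `0` is an eigenvalue of `A n` with multiplicity `3 ^ (n-1)`,
and the index `Ind (M n) = dim ker (M n) - dim ker (M n)ᵀ` of the hub/rim block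
of `A n` equals `3 ^ (n-1)`. -/
theorem dsfn_zero_modes_and_index (n : ℕ) (hn : 1 ≤ n) :
    Module.finrank ℝ (LinearMap.ker (Matrix.toLin' ((G n).adjMatrix ℝ))) = 3 ^ (n - 1) ∧
    Module.finrank ℝ (LinearMap.ker (Matrix.toLin' (Mblock n))) -
      Module.finrank ℝ (LinearMap.ker (Matrix.toLin' ((Mblock n).transpose))) = 3 ^ (n - 1) := by
  obtain ⟨n, rfl⟩ : ∃ m, n = m + 1 := ⟨n - 1, by omega⟩
  have hT : finrank ℝ (ker (toLin' (Mblock (n + 1))ᵀ)) = 0 := by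
    rw [ker_toLin'_Mblock_transpose, finrank_bot]
  have hindex := finrank_ker_toLin'_sub_finrank_ker_toLin'_transpose (Mblock (n + 1))
  rw [hT, card_rim, card_hub] at hindex
  have hM : finrank ℝ (ker (toLin' (Mblock (n + 1)))) = 3 ^ n := by omega
  rw [finrank_ker_toLin'_of_blockAntidiagonal _ IsHub (adjMatrix_eq_zero_of_isHub_iff _),
    ← Mblock_eq_toBlock, ← Mblock_transpose_eq_toBlock, hM, hT]
  simp

end DSFN
end
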